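/- The limit as k → ∞ of (1/(2k+1))·log( ∑_{j=0}^{k} ([k choose j]_{2k+1})^4 ) exists and equals (8/π)·Λ(π/4). (This is the analytic core of the Extended Volume Conjecture for universal hyperbolic links of complexity 1: the evaluation at e^{2πi/(2k+1)} of the (2k+1)-colored Jones invariant of such a link equals ∑_{j=0}^{k} ([k choose j]_{2k+1})^4, and 2πi times the right-hand side’s normalization matches Vol/(2π) with Vol = 2·Vol_Oct = 16·Λ(π/4).) -/

import Mathlib

open Real Filter Finset

/-- The Lobachevsky function Λ(x) = −∫₀ˣ log|2 sin s| ds. -/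
noncomputable def Lob (x : ℝ) : ℝ := -∫ s in (0:ℝ)..x, Real.log |2 * Real.sin s|

/-- Evaluated quantum integer `[n]_d = sin(nπ/d)/sin(π/d)`. -/
noncomputable def qInt (d n : ℕ) : ℝ := Real.sin (n * Real.pi / d) / Real.sin (Real.pi / d)

/-- Evaluated quantum factorial `[n]_d! = ∏_{i=1}^n [i]_d`. -/
noncomputable def qFact (d n : ℕ) : ℝ := ∏ i ∈ Finset.Icc 1 n, qInt d i

/-- Evaluated quantum binomial `[k choose j]_d = [k]_d! / ([j]_d! [k−j]_d!)`. -/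
noncomputable def qBinom (d k j : ℕ) : ℝ := qFact d k / (qFact d j * qFact d (k - j))

/-!
Put `h = π / (2k+1)` and `L n = ∑_{i=1}^n log (2 sin (i h))`. The powers of `2 sin h` cancel in the
quantum binomial, so `log [k choose j] = L k - L j - L (k-j)`. Since `Λ' = -log (2 sin)` is
decreasing on `(0, π/2)`, `Λ` is concave there, and comparing `h L n` with the integral gives
`-Λ(nh) ≤ h L n ≤ Λ(h) - Λ(nh) + h log 2`. By midpoint concavity, `h log [k choose j]` is at most
`2Λ(kh/2) + o(1)` for every `j`, with equality up to `o(1)` at `j = ⌊k/2⌋`. A sum of `k+1` fourth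
powers lies within a factor `k+1` of its largest term, `kh → π/2` and `Λ(π/2) = 0`, so
`(1/(2k+1)) log ∑ [k choose j]^4 = (h/π) log ∑ [k choose j]^4 → (4/π) · 2Λ(π/4)`.
-/

open MeasureTheory Set Topology

lemma Lob_eq_neg_integral (x : ℝ) : Lob x = -∫ s in (0 : ℝ)..x, log (2 * sin s) := by
  simp only [Lob, log_abs]

lemma intervalIntegrable_log_two_mul_sin (a b : ℝ) :
    IntervalIntegrable (fun s => log (2 * sin s)) volume a b := by
  have hmero : MeromorphicOn (fun s => 2 * sin s) (uIcc a b) :=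
    (analyticOnNhd_const.mul analyticOnNhd_sin).meromorphicOn
  simpa only [Real.norm_eq_abs, log_abs] using hmero.intervalIntegrable_log_norm

lemma continuous_Lob : Continuous Lob := by
  simp only [funext Lob_eq_neg_integral]
  exact (intervalIntegral.continuous_primitive intervalIntegrable_log_two_mul_sin 0).neg

lemma Filter.Tendsto.Lob {α : Type*} {l : Filter α} {x : α → ℝ} {p : ℝ}
    (hx : Tendsto x l (𝓝 p)) : Tendsto (fun a => Lob (x a)) l (𝓝 (Lob p)) :=
  (continuous_Lob.tendsto p).comp hx

@[simp]
lemma Lob_zero : Lob 0 = 0 := by simp [Lob]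

lemma Lob_pi_div_two : Lob (π / 2) = 0 := by
  have hsplit : ∫ s in (0 : ℝ)..π / 2, log (2 * sin s) =
      ∫ s in (0 : ℝ)..π / 2, (log 2 + log (sin s)) := by
    refine intervalIntegral.integral_congr_ae (Eventually.of_forall fun s hs => ?_)
    rw [uIoc_of_le (by positivity)] at hs
    exact log_mul two_ne_zero (sin_pos_of_pos_of_lt_pi hs.1 (by linarith [hs.2, pi_pos])).ne'
  have hlogsin : IntervalIntegrable (fun s => log (sin s)) volume 0 (π / 2) :=
    intervalIntegrable_log_sin
  rw [Lob_eq_neg_integral, hsplit, intervalIntegral.integral_add intervalIntegrable_const hlogsin,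
    integral_log_sin_zero_pi_div_two, intervalIntegral.integral_const, smul_eq_mul]
  ring

lemma hasDerivAt_Lob {x : ℝ} (hx₀ : 0 < x) (hxπ : x < π) :
    HasDerivAt Lob (-log (2 * sin x)) x := by
  simp only [funext Lob_eq_neg_integral]
  refine (intervalIntegral.integral_hasDerivAt_right (intervalIntegrable_log_two_mul_sin 0 x)
    ?_ ?_).neg
  · exact (by fun_prop : Measurable fun s => log (2 * sin s)).stronglyMeasurable
      |>.stronglyMeasurableAtFilter
  · exact ContinuousAt.log (by fun_prop) (by positivity [sin_pos_of_pos_of_lt_pi hx₀ hxπ])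

lemma concaveOn_Lob : ConcaveOn ℝ (Icc 0 (π / 2)) Lob := by
  have hderiv : ∀ x ∈ interior (Icc 0 (π / 2)), HasDerivAt Lob (-log (2 * sin x)) x := by
    rw [interior_Icc]
    exact fun x hx => hasDerivAt_Lob hx.1 (by linarith [hx.2, pi_pos])
  refine AntitoneOn.concaveOn_of_deriv (convex_Icc _ _) continuous_Lob.continuousOn
    (fun x hx => (hderiv x hx).differentiableAt.differentiableWithinAt) ?_
  intro x hx y hy hxy
  rw [(hderiv x hx).deriv, (hderiv y hy).deriv, neg_le_neg_iff]
  rw [interior_Icc] at hx hy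
  have hsin_pos : 0 < sin x := sin_pos_of_pos_of_lt_pi hx.1 (by linarith [hx.2, pi_pos])
  have hsin_le : sin x ≤ sin y :=
    sin_le_sin_of_le_of_le_pi_div_two (by linarith [hx.1, pi_pos]) hy.2.le hxy
  exact log_le_log (by positivity) (by linarith)

lemma Lob_add_Lob_le {x y : ℝ} (hx : x ∈ Icc 0 (π / 2)) (hy : y ∈ Icc 0 (π / 2)) :
    Lob x + Lob y ≤ 2 * Lob ((x + y) / 2) := by
  have := concaveOn_Lob.2 hx hy (by norm_num : (0 : ℝ) ≤ 1 / 2) (by norm_num : (0 : ℝ) ≤ 1 / 2)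
    (by norm_num)
  rw [smul_eq_mul, smul_eq_mul, smul_eq_mul, smul_eq_mul] at this
  rw [show (x + y) / 2 = 1 / 2 * x + 1 / 2 * y by ring]
  linarith

section RiemannSum

variable {S : Set ℝ} {f f' : ℝ → ℝ} {a h : ℝ}

lemma ConcaveOn.mul_sum_deriv_le_sub (hf : ConcaveOn ℝ S f) (hh : 0 < h) {n : ℕ}
    (hS : ∀ i ≤ n, a + i * h ∈ S)
    (hf' : ∀ i < n, HasDerivAt f (f' (a + (i + 1) * h)) (a + (i + 1) * h)) :
    h * ∑ i ∈ range n, f' (a + (i + 1) * h) ≤ f (a + n * h) - f a := by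
  induction n with
  | zero => simp
  | succ n ih =>
    have hstep := hf.le_slope_of_hasDerivAt (hS n n.le_succ) (by exact_mod_cast hS (n + 1) le_rfl)
      (by push_cast; linarith) (by exact_mod_cast hf' n n.lt_succ_self)
    rw [slope_def_field, show a + ((n + 1 : ℕ) : ℝ) * h - (a + n * h) = h by push_cast; ring,
      le_div_iff₀ hh] at hstep
    have := ih (fun i hi => hS i (hi.trans n.le_succ)) (fun i hi => hf' i (hi.trans n.lt_succ_self))
    rw [sum_range_succ, mul_add]
    push_cast at hstep ⊢
    linarith

lemma ConcaveOn.sub_le_mul_sum_deriv (hf : ConcaveOn ℝ S f) (hh : 0 < h) {n : ℕ}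
    (hS : ∀ i ≤ n, a + i * h ∈ S) (hf' : ∀ i < n, HasDerivAt f (f' (a + i * h)) (a + i * h)) :
    f (a + n * h) - f a ≤ h * ∑ i ∈ range n, f' (a + i * h) := by
  induction n with
  | zero => simp
  | succ n ih =>
    have hstep := hf.slope_le_of_hasDerivAt (hS n n.le_succ) (by exact_mod_cast hS (n + 1) le_rfl)
      (by push_cast; linarith) (hf' n n.lt_succ_self)
    rw [slope_def_field, show a + ((n + 1 : ℕ) : ℝ) * h - (a + n * h) = h by push_cast; ring,
      div_le_iff₀ hh] at hstep
    have := ih (fun i hi => hS i (hi.trans n.le_succ)) (fun i hi => hf' i (hi.trans n.lt_succ_self))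
    rw [sum_range_succ, mul_add]
    push_cast at hstep ⊢
    linarith

end RiemannSum

noncomputable def sinProd (h : ℝ) (n : ℕ) : ℝ := ∏ i ∈ range n, 2 * sin ((i + 1) * h)

section sinProd

variable {h : ℝ} {n : ℕ}

lemma two_mul_sin_succ_mul_pos (hh : 0 < h) (hn : n * h < π) {i : ℕ} (hi : i < n) :
    0 < 2 * sin ((i + 1) * h) := by
  have hi : (i : ℝ) + 1 ≤ n := by exact_mod_cast hi
  have := sin_pos_of_pos_of_lt_pi (by positivity) (by nlinarith : ((i : ℝ) + 1) * h < π)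
  positivity

lemma sinProd_pos (hh : 0 < h) (hn : n * h < π) : 0 < sinProd h n :=
  prod_pos fun _ hi => two_mul_sin_succ_mul_pos hh hn (mem_range.1 hi)

lemma log_sinProd (hh : 0 < h) (hn : n * h < π) :
    log (sinProd h n) = ∑ i ∈ range n, log (2 * sin ((i + 1) * h)) :=
  log_prod fun _ hi => (two_mul_sin_succ_mul_pos hh hn (mem_range.1 hi)).ne'

lemma neg_Lob_le_mul_log_sinProd (hh : 0 < h) (hn : n * h ≤ π / 2) :
    -Lob (n * h) ≤ h * log (sinProd h n) := by
  have hriemann := concaveOn_Lob.mul_sum_deriv_le_sub (a := 0) (f' := fun x => -log (2 * sin x))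
    hh (n := n)
    (fun i hi => ⟨by positivity, by
      have : (i : ℝ) ≤ n := by exact_mod_cast hi
      nlinarith⟩)
    (fun i hi => hasDerivAt_Lob (by positivity) (by
      have : (i : ℝ) + 1 ≤ n := by exact_mod_cast hi
      nlinarith [pi_pos]))
  simp only [zero_add, Lob_zero, sub_zero, sum_neg_distrib] at hriemann
  rw [log_sinProd hh (by linarith [pi_pos])]
  linarith

lemma mul_log_sinProd_le (hh : 0 < h) (hn₀ : 0 < n) (hn : n * h ≤ π / 2) :
    h * log (sinProd h n) ≤ Lob h - Lob (n * h) + h * log 2 := by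
  obtain ⟨m, rfl⟩ := Nat.exists_eq_add_of_lt hn₀
  rw [zero_add] at hn ⊢
  have hlast_pos := two_mul_sin_succ_mul_pos hh (by linarith [pi_pos]) m.lt_succ_self
  push_cast at hn ⊢
  have hriemann := concaveOn_Lob.sub_le_mul_sum_deriv (a := h) (f' := fun x => -log (2 * sin x))
    hh (n := m)
    (fun i hi => ⟨by positivity, by
      have : (i : ℝ) + 1 ≤ m + 1 := by exact_mod_cast Nat.succ_le_succ hi
      nlinarith⟩)
    (fun i hi => hasDerivAt_Lob (by positivity) (by
      have : (i : ℝ) + 1 ≤ m + 1 := by exact_mod_cast Nat.succ_le_succ hi.le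
      nlinarith [pi_pos]))
  simp only [sum_neg_distrib, show ∀ x : ℝ, h + x * h = (x + 1) * h from fun x => by ring]
    at hriemann
  have hlast : log (2 * sin ((m + 1) * h)) ≤ log 2 :=
    log_le_log hlast_pos (by linarith [sin_le_one ((m + 1) * h)])
  rw [log_sinProd hh (by push_cast; linarith [pi_pos]), sum_range_succ, mul_add]
  linarith [mul_le_mul_of_nonneg_left hlast hh.le]

lemma sinProd_pi_div_pos {d : ℕ} (hnd : n < d) : 0 < sinProd (π / d) n := by
  have hd : (0 : ℝ) < d := by exact_mod_cast (by omega : 0 < d)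
  refine sinProd_pos (div_pos pi_pos hd) ?_
  rw [mul_div_assoc', div_lt_iff₀ hd]
  rw [mul_comm π]
  exact mul_lt_mul_of_pos_right (Nat.cast_lt.2 hnd) pi_pos

end sinProd

lemma natCast_mul_pi_div_le {n d : ℕ} (hnd : 2 * n ≤ d) : n * (π / d) ≤ π / 2 := by
  have hnd' : (n : ℝ) / d ≤ 1 / 2 := by
    refine div_le_of_le_mul₀ (Nat.cast_nonneg d) one_half_pos.le ?_
    have : 2 * (n : ℝ) ≤ d := by exact_mod_cast hnd
    linarith
  calc n * (π / d) = π * (n / d) := by ring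
    _ ≤ π * (1 / 2) := mul_le_mul_of_nonneg_left hnd' pi_pos.le
    _ = π / 2 := by ring

lemma qFact_eq_sinProd (d n : ℕ) : qFact d n = sinProd (π / d) n / (2 * sin (π / d)) ^ n := by
  induction n with
  | zero => simp [qFact, sinProd]
  | succ n ih =>
    have hqInt : qInt d (n + 1) = 2 * sin ((n + 1) * (π / d)) / (2 * sin (π / d)) := by
      rw [qInt, mul_div_mul_left _ _ two_ne_zero, mul_div_assoc]
      push_cast
      rfl
    rw [qFact, prod_Icc_succ_top (by omega), ← qFact, ih, hqInt, div_mul_div_comm, ← pow_succ,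
      sinProd, sinProd, prod_range_succ]

section qBinom

variable {d k j : ℕ}

lemma qBinom_eq_sinProd (hd : 2 ≤ d) (hj : j ≤ k) :
    qBinom d k j = sinProd (π / d) k / (sinProd (π / d) j * sinProd (π / d) (k - j)) := by
  have hsin : 2 * sin (π / d) ≠ 0 := by
    refine mul_ne_zero two_ne_zero (sin_pos_of_pos_of_lt_pi (by positivity)
      (div_lt_self pi_pos ?_)).ne'
    exact_mod_cast hd
  rw [qBinom, qFact_eq_sinProd, qFact_eq_sinProd, qFact_eq_sinProd, div_mul_div_comm,
    div_div_div_eq, ← pow_add, Nat.add_sub_cancel' hj, mul_comm (_ ^ k),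
    mul_div_mul_right _ _ (pow_ne_zero _ hsin)]

lemma qBinom_pos (hd : 2 ≤ d) (hkd : k < d) (hj : j ≤ k) : 0 < qBinom d k j := by
  rw [qBinom_eq_sinProd hd hj]
  exact div_pos (sinProd_pi_div_pos hkd)
    (mul_pos (sinProd_pi_div_pos (by omega)) (sinProd_pi_div_pos (by omega)))

lemma log_qBinom (hd : 2 ≤ d) (hkd : k < d) (hj : j ≤ k) :
    log (qBinom d k j) =
      log (sinProd (π / d) k) - log (sinProd (π / d) j) - log (sinProd (π / d) (k - j)) := by
  have hj_pos : 0 < sinProd (π / d) j := sinProd_pi_div_pos (by omega)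
  have hkj_pos : 0 < sinProd (π / d) (k - j) := sinProd_pi_div_pos (by omega)
  rw [qBinom_eq_sinProd hd hj, log_div (sinProd_pi_div_pos hkd).ne' (mul_pos hj_pos hkj_pos).ne',
    log_mul hj_pos.ne' hkj_pos.ne', sub_sub]

lemma mul_log_qBinom_le (hk : 0 < k) (hkd : 2 * k ≤ d) (hj : j ≤ k) :
    π / d * log (qBinom d k j) ≤
      Lob (π / d) - Lob (k * (π / d)) + π / d * log 2 + 2 * Lob (k * (π / d) / 2) := by
  have hh : 0 < π / d := div_pos pi_pos (by exact_mod_cast (by omega : 0 < d))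
  have hmid := Lob_add_Lob_le (x := j * (π / d)) (y := (k - j : ℕ) * (π / d))
    ⟨by positivity, natCast_mul_pi_div_le (by omega)⟩
    ⟨by positivity, natCast_mul_pi_div_le (by omega)⟩
  rw [Nat.cast_sub hj, ← add_mul, add_sub_cancel] at hmid
  have := mul_log_sinProd_le hh hk (natCast_mul_pi_div_le hkd)
  have := neg_Lob_le_mul_log_sinProd (n := j) hh (natCast_mul_pi_div_le (by omega))
  have := neg_Lob_le_mul_log_sinProd (n := k - j) hh (natCast_mul_pi_div_le (by omega))
  rw [Nat.cast_sub hj] at this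
  rw [log_qBinom (by omega) (by omega) hj]
  linarith

lemma le_mul_log_qBinom (hj₀ : 0 < j) (hjk : j < k) (hkd : 2 * k ≤ d) :
    Lob (j * (π / d)) + Lob ((k - j : ℕ) * (π / d)) - Lob (k * (π / d)) - 2 * Lob (π / d)
      - 2 * (π / d) * log 2 ≤ π / d * log (qBinom d k j) := by
  have hh : 0 < π / d := div_pos pi_pos (by exact_mod_cast (by omega : 0 < d))
  have := neg_Lob_le_mul_log_sinProd hh (natCast_mul_pi_div_le hkd)
  have := mul_log_sinProd_le hh hj₀ (natCast_mul_pi_div_le (by omega))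
  have := mul_log_sinProd_le (n := k - j) hh (by omega) (natCast_mul_pi_div_le (by omega))
  rw [log_qBinom (by omega) (by omega) hjk.le]
  linarith

end qBinom

section LogSumPow

variable {ι : Type*} {s : Finset ι} {f : ι → ℝ}

lemma mul_log_le_log_sum_pow (hf : ∀ i ∈ s, 0 ≤ f i) {i : ι} (hi : i ∈ s) (hfi : 0 < f i)
    (n : ℕ) : n * log (f i) ≤ log (∑ j ∈ s, f j ^ n) := by
  rw [← log_pow]
  exact log_le_log (pow_pos hfi n) (single_le_sum (fun j hj => pow_nonneg (hf j hj) n) hi)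

lemma log_sum_pow_le (hs : s.Nonempty) (hf : ∀ i ∈ s, 0 < f i) {M : ℝ}
    (hM : ∀ i ∈ s, log (f i) ≤ M) (n : ℕ) : log (∑ i ∈ s, f i ^ n) ≤ log #s + n * M := by
  have hsum : ∑ i ∈ s, f i ^ n ≤ #s * exp M ^ n := by
    simpa only [nsmul_eq_mul] using sum_le_card_nsmul s (fun i => f i ^ n) (exp M ^ n)
      fun i hi => pow_le_pow_left₀ (hf i hi).le ((log_le_iff_le_exp (hf i hi)).1 (hM i hi)) n
  calc log (∑ i ∈ s, f i ^ n) ≤ log (#s * exp M ^ n) :=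
        log_le_log (sum_pos (fun i hi => pow_pos (hf i hi) n) hs) hsum
    _ = log #s + n * M := by
        rw [log_mul (by simpa using hs.ne_empty) (by positivity), log_pow, log_exp]

end LogSumPow

noncomputable def mesh (k : ℕ) : ℝ := π / (2 * k + 1)

lemma pi_div_natCast_eq_mesh (k : ℕ) : π / ((2 * k + 1 : ℕ) : ℝ) = mesh k := by
  push_cast
  rfl

lemma mesh_pos (k : ℕ) : 0 < mesh k := by
  unfold mesh
  positivity

lemma natCast_mul_mesh (k : ℕ) : k * mesh k = π / 2 - mesh k / 2 := by
  unfold mesh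
  field_simp
  ring

lemma tendsto_mesh : Tendsto mesh atTop (𝓝 0) :=
  tendsto_const_nhds.div_atTop <| tendsto_atTop_add_const_right _ _ <|
    tendsto_natCast_atTop_atTop.const_mul_atTop two_pos

lemma tendsto_natCast_mul_mesh : Tendsto (fun k : ℕ => k * mesh k) atTop (𝓝 (π / 2)) := by
  simp only [natCast_mul_mesh]
  simpa using (tendsto_mesh.div_const 2).const_sub (π / 2)

lemma tendsto_natCast_mul_mesh_div_two :
    Tendsto (fun k : ℕ => k * mesh k / 2) atTop (𝓝 (π / 4)) := by
  simpa only [div_div, show (2 : ℝ) * 2 = 4 by norm_num] using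
    tendsto_natCast_mul_mesh.div_const 2

lemma tendsto_half_mul_mesh :
    Tendsto (fun k : ℕ => ((k / 2 : ℕ) : ℝ) * mesh k) atTop (𝓝 (π / 4)) := by
  refine tendsto_of_tendsto_of_tendsto_of_le_of_le
    (by simpa using tendsto_natCast_mul_mesh_div_two.sub (tendsto_mesh.div_const 2))
    tendsto_natCast_mul_mesh_div_two (fun k => ?_) (fun k => ?_)
  · have : (k : ℝ) ≤ 2 * (k / 2 : ℕ) + 1 := by exact_mod_cast (by omega : k ≤ 2 * (k / 2) + 1)
    dsimp only
    nlinarith [mesh_pos k]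
  · dsimp only
    rw [mul_div_right_comm]
    exact mul_le_mul_of_nonneg_right Nat.cast_div_le (mesh_pos k).le

lemma tendsto_sub_half_mul_mesh :
    Tendsto (fun k : ℕ => ((k - k / 2 : ℕ) : ℝ) * mesh k) atTop (𝓝 (π / 4)) := by
  have hcast (k : ℕ) : ((k - k / 2 : ℕ) : ℝ) = k - (k / 2 : ℕ) := Nat.cast_sub (k.div_le_self 2)
  simp only [hcast, sub_mul]
  convert tendsto_natCast_mul_mesh.sub tendsto_half_mul_mesh using 2
  ring

lemma tendsto_log_succ_div : Tendsto (fun k : ℕ => log (k + 1) / (2 * k + 1)) atTop (𝓝 0) := by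
  have := (tendsto_pow_log_div_mul_add_atTop 2 (-1) 1 two_ne_zero).comp
    (tendsto_atTop_add_const_right atTop (1 : ℝ) tendsto_natCast_atTop_atTop)
  refine this.congr fun k => ?_
  simp only [Function.comp_apply, pow_one]
  ring_nf

/-- Lower bound for `mesh k * log [k choose ⌊k/2⌋]_{2k+1}`. -/
noncomputable def centralLowerBound (k : ℕ) : ℝ :=
  Lob ((k / 2 : ℕ) * mesh k) + Lob ((k - k / 2 : ℕ) * mesh k) - Lob (k * mesh k)
    - 2 * Lob (mesh k) - 2 * mesh k * log 2

/-- Upper bound for `mesh k * log [k choose j]_{2k+1}`, uniform in `j ≤ k`. -/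
noncomputable def uniformUpperBound (k : ℕ) : ℝ :=
  Lob (mesh k) - Lob (k * mesh k) + mesh k * log 2 + 2 * Lob (k * mesh k / 2)

lemma tendsto_centralLowerBound : Tendsto centralLowerBound atTop (𝓝 (2 * Lob (π / 4))) := by
  have := (((tendsto_half_mul_mesh.Lob.add tendsto_sub_half_mul_mesh.Lob).sub
    tendsto_natCast_mul_mesh.Lob).sub (tendsto_mesh.Lob.const_mul 2)).sub
    ((tendsto_mesh.const_mul 2).mul_const (log 2))
  unfold centralLowerBound
  simpa [Lob_pi_div_two, two_mul] using this

lemma tendsto_uniformUpperBound : Tendsto uniformUpperBound atTop (𝓝 (2 * Lob (π / 4))) := by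
  have := ((tendsto_mesh.Lob.sub tendsto_natCast_mul_mesh.Lob).add
    (tendsto_mesh.mul_const (log 2))).add (tendsto_natCast_mul_mesh_div_two.Lob.const_mul 2)
  unfold uniformUpperBound
  simpa [Lob_pi_div_two] using this

lemma four_div_pi_mul_centralLowerBound_le {k : ℕ} (hk : 2 ≤ k) :
    4 / π * centralLowerBound k ≤
      1 / (2 * k + 1) * log (∑ j ∈ range (k + 1), qBinom (2 * k + 1) k j ^ 4) := by
  have hcentral := le_mul_log_qBinom (d := 2 * k + 1) (k := k) (j := k / 2) (by omega) (by omega)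
    (by omega)
  rw [pi_div_natCast_eq_mesh] at hcentral
  have hsum := mul_log_le_log_sum_pow (s := range (k + 1)) (f := qBinom (2 * k + 1) k)
    (fun j hj => (qBinom_pos (by omega) (by omega) (mem_range_succ_iff.1 hj)).le)
    (mem_range_succ_iff.2 (k.div_le_self 2))
    (qBinom_pos (by omega) (by omega) (k.div_le_self 2)) 4
  have hπ := pi_pos
  calc 4 / π * centralLowerBound k
      ≤ 4 / π * (mesh k * log (qBinom (2 * k + 1) k (k / 2))) :=
        mul_le_mul_of_nonneg_left hcentral (by positivity)
    _ = 1 / (2 * k + 1) * (4 * log (qBinom (2 * k + 1) k (k / 2))) := by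
        unfold mesh
        field_simp
    _ ≤ _ := mul_le_mul_of_nonneg_left (by exact_mod_cast hsum) (by positivity)

lemma le_uniformUpperBound {k : ℕ} (hk : 1 ≤ k) :
    1 / (2 * k + 1) * log (∑ j ∈ range (k + 1), qBinom (2 * k + 1) k j ^ 4) ≤
      log (k + 1) / (2 * k + 1) + 4 / π * uniformUpperBound k := by
  have huniform (j : ℕ) (hj : j ∈ range (k + 1)) :
      log (qBinom (2 * k + 1) k j) ≤ uniformUpperBound k / mesh k := by
    have := mul_log_qBinom_le (d := 2 * k + 1) (by omega) (by omega) (mem_range_succ_iff.1 hj)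
    rw [pi_div_natCast_eq_mesh] at this
    rwa [le_div_iff₀' (mesh_pos k)]
  have hsum := log_sum_pow_le (nonempty_range_iff.2 k.succ_ne_zero)
    (fun j hj => qBinom_pos (by omega) (by omega) (mem_range_succ_iff.1 hj)) huniform 4
  rw [card_range] at hsum
  have hπ := pi_pos
  calc 1 / (2 * k + 1) * log (∑ j ∈ range (k + 1), qBinom (2 * k + 1) k j ^ 4)
      ≤ 1 / (2 * k + 1) * (log (k + 1) + 4 * (uniformUpperBound k / mesh k)) :=
        mul_le_mul_of_nonneg_left (by exact_mod_cast hsum) (by positivity)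
    _ = log (k + 1) / (2 * k + 1) + 4 / π * uniformUpperBound k := by
        unfold mesh
        field_simp

/-- `lim_{k→∞} (1/(2k+1)) log( ∑_{j=0}^k [k choose j]_{2k+1}^4 ) = (8/π) Λ(π/4)`:
the analytic core of the Extended Volume Conjecture for universal hyperbolic links of
complexity 1. -/
theorem stmt_11 :
    Filter.Tendsto
      (fun k : ℕ =>
        (1 / (2 * (k : ℝ) + 1)) *
          Real.log (∑ j ∈ Finset.range (k + 1), (qBinom (2 * k + 1) k j) ^ 4))
      Filter.atTop (nhds ((8 / Real.pi) * Lob (Real.pi / 4))) := by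
  have hlower := tendsto_centralLowerBound.const_mul (4 / π)
  have hupper := tendsto_log_succ_div.add (tendsto_uniformUpperBound.const_mul (4 / π))
  rw [show 4 / π * (2 * Lob (π / 4)) = 8 / π * Lob (π / 4) by ring] at hlower
  rw [show 0 + 4 / π * (2 * Lob (π / 4)) = 8 / π * Lob (π / 4) by ring] at hupper
  refine tendsto_of_tendsto_of_tendsto_of_le_of_le' hlower hupper ?_ ?_
  · filter_upwards [eventually_ge_atTop 2] with k hk using four_div_pi_mul_centralLowerBound_le hk
  · filter_upwards [eventually_ge_atTop 1] with k hk using le_uniformUpperBound hk
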